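/- arXiv:1304.5831 — 2 statements merged into one kernel-verified Lean document; each statement's English description precedes it below -/
import Mathlib

section
/- Let (f,g) ∈ 𝒜. Then the semigroup ⟨f,g⟩₊ acting on I=[0,1] has a unique minimal set K; moreover K equals the closure of the orbit O₊(0) of 0 and also equals the closure of the orbit O₊(1) of 1. -/
/-!
Iterating `f` pushes every point of `I` down to its unique fixed point `0`, and iterating `g`
pushes it up to `1`, so `0` and `1` lie in the closure of every orbit. Since orbit closures are
forward invariant, `closure O₊(x) ⊆ closure O₊(y)` whenever `x ∈ closure O₊(y)`; hence
`closure O₊(0) = closure O₊(1)` is contained in every orbit closure of a point of `I`, is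
itself minimal, and is the only minimal set.
-/

open Set Function MeasureTheory

noncomputable section

namespace IFSPaper

/-- The closed unit interval `I = [0,1]` as a subset of `ℝ`. -/
def unitI : Set ℝ := Set.Icc 0 1

/-- Membership in the class `𝒜`: `f, g : I → I` are `C¹` diffeomorphisms onto their
images with `f 0 = 0`, `g 1 = 1`, `f x < x < g x` on `(0,1)` and `0 < g 0 < f 1 < 1`. -/
structure MemA (f g : ℝ → ℝ) : Prop where
  f_maps : Set.MapsTo f unitI unitI
  g_maps : Set.MapsTo g unitI unitI
  f_c1 : ContDiff ℝ 1 f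
  g_c1 : ContDiff ℝ 1 g
  f_inj : Set.InjOn f unitI
  g_inj : Set.InjOn g unitI
  f_deriv_ne : ∀ x ∈ unitI, deriv f x ≠ 0
  g_deriv_ne : ∀ x ∈ unitI, deriv g x ≠ 0
  f_zero : f 0 = 0
  g_one : g 1 = 1
  f_lt_id : ∀ x ∈ Set.Ioo (0:ℝ) 1, f x < x
  id_lt_g : ∀ x ∈ Set.Ioo (0:ℝ) 1, x < g x
  g0_pos : 0 < g 0
  g0_lt_f1 : g 0 < f 1
  f1_lt_one : f 1 < 1

/-- The element of the semigroup `⟨f,g⟩₊` associated to a word in the two generators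
(`true ↦ f`, `false ↦ g`). -/
def word (f g : ℝ → ℝ) : List Bool → ℝ → ℝ
  | [] => id
  | b :: t => (if b then f else g) ∘ word f g t

/-- The semigroup orbit `O₊(x) = {φ x : φ ∈ ⟨f,g⟩₊}` of a point `x`. -/
def orbitP (f g : ℝ → ℝ) (x : ℝ) : Set ℝ :=
  {y | ∃ w : List Bool, w ≠ [] ∧ word f g w x = y}

/-- `K` is a minimal set for the action of `⟨f,g⟩₊` on `I`. -/
def IsMinimalSet (f g : ℝ → ℝ) (K : Set ℝ) : Prop :=
  K.Nonempty ∧ K ⊆ unitI ∧ ∀ x ∈ K, closure (orbitP f g x) = K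

/-- The overlapping region `W = [g 0, f 1]`. -/
def ovW (f g : ℝ → ℝ) : Set ℝ := Set.Icc (g 0) (f 1)

/-- The fundamental domain `Fₙ = [f^[n+1] 1, f^[n] 1]`. -/
def Fint (f : ℝ → ℝ) (n : ℕ) : Set ℝ := Set.Icc (f^[n+1] 1) (f^[n] 1)

/-- The fundamental domain `Gₙ = [g^[n] 0, g^[n+1] 0]`. -/
def Gint (g : ℝ → ℝ) (n : ℕ) : Set ℝ := Set.Icc (g^[n] 0) (g^[n+1] 0)

/-- Single overlapping property `So`: `f² 1 < g 0` and `f 1 < g² 0`. -/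
def So (f g : ℝ → ℝ) : Prop := f (f 1) < g 0 ∧ f 1 < g (g 0)

/-- A (nonempty) closed bounded interval. -/
def IsClosedInterval (A : Set ℝ) : Prop := ∃ a b : ℝ, a ≤ b ∧ A = Set.Icc a b

/-- A closed bounded interval with nonempty interior. -/
def IsNondegClosedInterval (A : Set ℝ) : Prop := ∃ a b : ℝ, a < b ∧ A = Set.Icc a b

/-- A nonempty open bounded interval. -/
def IsOpenInterval (J : Set ℝ) : Prop := ∃ a b : ℝ, a < b ∧ J = Set.Ioo a b

/-- Hole property `Ho` witnessed by the pair of holes `(Hf, Hg)`. -/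
def HoleAt (f g : ℝ → ℝ) (Hf Hg : Set ℝ) : Prop :=
  IsNondegClosedInterval Hf ∧ IsNondegClosedInterval Hg ∧
  Hf ⊆ interior (Fint f 1 \ ovW f g) ∧
  Hg ⊆ interior (Gint g 1 \ ovW f g) ∧
  g '' Hf = Hg ∧ f '' Hg = Hf

/-- Hole property `Ho`. -/
def Ho (f g : ℝ → ℝ) : Prop := ∃ Hf Hg : Set ℝ, HoleAt f g Hf Hg

/-- The induced (first-return) map `𝓕 : F₁ \ {f 1} → G₁`,
`𝓕 x = g^[-n x] (f⁻¹ x)` where `n x` is least with `g^[-n x] (f⁻¹ x) ∈ G₁`. -/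
def calF (f g : ℝ → ℝ) (x : ℝ) : ℝ :=
  (Function.invFunOn g unitI)^[sInf {n : ℕ |
      (Function.invFunOn g unitI)^[n] (Function.invFunOn f unitI x) ∈ Gint g 1}]
    (Function.invFunOn f unitI x)

/-- The induced (first-return) map `𝓖 : G₁ \ {g 0} → F₁`. -/
def calG (f g : ℝ → ℝ) (x : ℝ) : ℝ :=
  (Function.invFunOn f unitI)^[sInf {n : ℕ |
      (Function.invFunOn f unitI)^[n] (Function.invFunOn g unitI x) ∈ Fint f 1}]
    (Function.invFunOn g unitI x)

/-- Eventual expansion property `Ee`: `𝓕` is uniformly expanding outside `Hf`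
and `𝓖` outside `Hg` (at all points where the derivative makes sense). -/
def Ee (f g : ℝ → ℝ) (Hf Hg : Set ℝ) : Prop :=
  ∃ μ : ℝ, 1 < μ ∧
    (∀ y ∈ Fint f 1 \ Hf, DifferentiableAt ℝ (calF f g) y → μ < deriv (calF f g) y) ∧
    (∀ y ∈ Gint g 1 \ Hg, DifferentiableAt ℝ (calG f g) y → μ < deriv (calG f g) y)

/-- The ruination region `R_f = 𝓕⁻¹(Hg) ⊆ F₁`. -/
def Rf (f g : ℝ → ℝ) (Hg : Set ℝ) : Set ℝ :=
  {x | x ∈ Fint f 1 \ {f 1} ∧ calF f g x ∈ Hg}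

/-- The ruination region `R_g = 𝓖⁻¹(Hf) ⊆ G₁`. -/
def Rg (f g : ℝ → ℝ) (Hf : Set ℝ) : Set ℝ :=
  {x | x ∈ Gint g 1 \ {g 0} ∧ calG f g x ∈ Hf}

/-- Castration property `Ca`: `W ⊆ int R_f ∪ int R_g`. -/
def Ca (f g : ℝ → ℝ) (Hf Hg : Set ℝ) : Prop :=
  ovW f g ⊆ interior (Rf f g Hg) ∪ interior (Rg f g Hf)

/-- Membership in the class `𝒞` with the given holes `(Hf, Hg)`:
`(f,g) ∈ 𝒜` together with `So`, `Ho`, `Ee` and `Ca`. -/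
def MemC (f g : ℝ → ℝ) (Hf Hg : Set ℝ) : Prop :=
  MemA f g ∧ So f g ∧ HoleAt f g Hf Hg ∧ Ee f g Hf Hg ∧ Ca f g Hf Hg

/-- The interval `I₋₁ = [0, 1/3 - ε]` of the appendix example. -/
def Im1 (ε : ℝ) : Set ℝ := Set.Icc 0 (1/3 - ε)

/-- The interval `I₀ = [1/3 + ε, 2/3 - ε]` of the appendix example. -/
def Iz (ε : ℝ) : Set ℝ := Set.Icc (1/3 + ε) (2/3 - ε)

/-- The interval `I₁ = [2/3 + ε, 1]` of the appendix example. -/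
def Ip1 (ε : ℝ) : Set ℝ := Set.Icc (2/3 + ε) 1

/-- The inclusion property of the appendix example. -/
def InclusionProp (f g : ℝ → ℝ) (ε : ℝ) : Prop :=
  f '' Im1 ε ⊆ Im1 ε ∧ f '' Iz ε ⊆ interior (Im1 ε) ∧ f '' Ip1 ε ⊆ interior (Iz ε) ∧
  g '' Ip1 ε ⊆ Ip1 ε ∧ g '' Iz ε ⊆ interior (Ip1 ε) ∧ g '' Im1 ε ⊆ interior (Iz ε)

/-- The strong uniform contraction property of the appendix example. -/
def StrongContraction (f g : ℝ → ℝ) (ε lam : ℝ) : Prop :=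
  ∀ x ∈ Im1 ε ∪ Iz ε ∪ Ip1 ε, deriv f x < lam ∧ deriv g x < lam

end IFSPaper

open Filter Topology

theorem tendsto_iterate_of_lt_self {α : Type*} [ConditionallyCompleteLinearOrder α]
    [TopologicalSpace α] [OrderTopology α] {h : α → α} {a b x : α} (hc : Continuous h)
    (hmaps : MapsTo h (Icc a b) (Icc a b)) (ha : h a = a) (hlt : ∀ y ∈ Ioc a b, h y < y)
    (hx : x ∈ Icc a b) : Tendsto (fun n => h^[n] x) atTop (𝓝 a) := by
  have hmem : ∀ n, h^[n] x ∈ Icc a b := fun n => hmaps.iterate n hx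
  have hle : ∀ y ∈ Icc a b, h y ≤ y := fun y hy => by
    rcases hy.1.eq_or_lt with rfl | hay
    · exact ha.le
    · exact (hlt y ⟨hay, hy.2⟩).le
  have hanti : Antitone fun n => h^[n] x := antitone_nat_of_succ_le fun n => by
    rw [iterate_succ_apply']
    exact hle _ (hmem n)
  have hlim := tendsto_atTop_ciInf hanti ⟨a, forall_mem_range.2 fun n => (hmem n).1⟩
  set L := ⨅ n, h^[n] x
  have hL : L ∈ Icc a b := isClosed_Icc.mem_of_tendsto hlim (Eventually.of_forall hmem)
  have hfix : IsFixedPt h L := isFixedPt_of_tendsto_iterate hlim hc.continuousAt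
  rcases hL.1.eq_or_lt with hLa | haL
  · rwa [hLa]
  · exact absurd hfix (hlt L ⟨haL, hL.2⟩).ne

theorem tendsto_iterate_of_self_lt {α : Type*} [ConditionallyCompleteLinearOrder α]
    [TopologicalSpace α] [OrderTopology α] {h : α → α} {a b x : α} (hc : Continuous h)
    (hmaps : MapsTo h (Icc a b) (Icc a b)) (hb : h b = b) (hlt : ∀ y ∈ Ico a b, y < h y)
    (hx : x ∈ Icc a b) : Tendsto (fun n => h^[n] x) atTop (𝓝 b) :=
  tendsto_iterate_of_lt_self (α := αᵒᵈ) (a := OrderDual.toDual b) (b := OrderDual.toDual a) hc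
    (fun _ hy => (hmaps ⟨hy.2, hy.1⟩).symm) hb (fun y hy => hlt y ⟨hy.2, hy.1⟩) ⟨hx.2, hx.1⟩

namespace IFSPaper

variable {f g : ℝ → ℝ}

theorem word_append (w v : List Bool) (x : ℝ) :
    word f g (w ++ v) x = word f g w (word f g v x) := by
  induction w with
  | nil => rfl
  | cons b t ih => simp only [List.cons_append, word, comp_apply, ih]

theorem continuous_word (hf : Continuous f) (hg : Continuous g) (w : List Bool) :
    Continuous (word f g w) := by
  induction w with
  | nil => exact continuous_id
  | cons b t ih =>
    cases b
    · exact hg.comp ih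
    · exact hf.comp ih

theorem mapsTo_word {s : Set ℝ} (hf : MapsTo f s s) (hg : MapsTo g s s) (w : List Bool) :
    MapsTo (word f g w) s s := by
  induction w with
  | nil => exact mapsTo_id s
  | cons b t ih =>
    cases b
    · exact hg.comp ih
    · exact hf.comp ih

theorem word_replicate_true (n : ℕ) : word f g (List.replicate n true) = f^[n] := by
  induction n with
  | zero => rfl
  | succ n ih => rw [List.replicate_succ, word, ih, if_pos rfl, iterate_succ']

theorem word_replicate_false (n : ℕ) : word f g (List.replicate n false) = g^[n] := by
  induction n with
  | zero => rfl
  | succ n ih => rw [List.replicate_succ, word, ih, if_neg Bool.false_ne_true, iterate_succ']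

theorem iterate_succ_left_mem_orbitP (n : ℕ) (x : ℝ) : f^[n + 1] x ∈ orbitP f g x :=
  ⟨List.replicate (n + 1) true, by simp, by rw [word_replicate_true]⟩

theorem iterate_succ_right_mem_orbitP (n : ℕ) (x : ℝ) : g^[n + 1] x ∈ orbitP f g x :=
  ⟨List.replicate (n + 1) false, by simp, by rw [word_replicate_false]⟩

theorem closure_orbitP_subset_unitI (hf : MapsTo f unitI unitI) (hg : MapsTo g unitI unitI)
    {x : ℝ} (hx : x ∈ unitI) : closure (orbitP f g x) ⊆ unitI :=
  closure_minimal (by rintro _ ⟨w, -, rfl⟩; exact mapsTo_word hf hg w hx) isClosed_Icc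

theorem closure_orbitP_subset_of_mem (hf : Continuous f) (hg : Continuous g) {x y : ℝ}
    (hy : y ∈ closure (orbitP f g x)) : closure (orbitP f g y) ⊆ closure (orbitP f g x) := by
  refine closure_minimal ?_ isClosed_closure
  rintro _ ⟨w, hw, rfl⟩
  have himage : word f g w '' orbitP f g x ⊆ orbitP f g x := by
    rintro _ ⟨_, ⟨v, hv, rfl⟩, rfl⟩
    exact ⟨w ++ v, by simp [hw], word_append w v x⟩
  exact closure_mono himage
    (image_closure_subset_closure_image (continuous_word hf hg w) ⟨y, hy, rfl⟩)

theorem zero_mem_closure_orbitP (hA : MemA f g) {x : ℝ} (hx : x ∈ unitI) :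
    (0 : ℝ) ∈ closure (orbitP f g x) := by
  have hlt : ∀ y ∈ Ioc (0 : ℝ) 1, f y < y := fun y hy => by
    rcases hy.2.eq_or_lt with rfl | hy1
    · exact hA.f1_lt_one
    · exact hA.f_lt_id y ⟨hy.1, hy1⟩
  have hlim := tendsto_iterate_of_lt_self hA.f_c1.continuous hA.f_maps hA.f_zero hlt hx
  exact mem_closure_of_tendsto (hlim.comp (tendsto_add_atTop_nat 1))
    (Eventually.of_forall fun n => iterate_succ_left_mem_orbitP n x)

theorem one_mem_closure_orbitP (hA : MemA f g) {x : ℝ} (hx : x ∈ unitI) :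
    (1 : ℝ) ∈ closure (orbitP f g x) := by
  have hlt : ∀ y ∈ Ico (0 : ℝ) 1, y < g y := fun y hy => by
    rcases hy.1.eq_or_lt with rfl | hy0
    · exact hA.g0_pos
    · exact hA.id_lt_g y ⟨hy0, hy.2⟩
  have hlim := tendsto_iterate_of_self_lt hA.g_c1.continuous hA.g_maps hA.g_one hlt hx
  exact mem_closure_of_tendsto (hlim.comp (tendsto_add_atTop_nat 1))
    (Eventually.of_forall fun n => iterate_succ_right_mem_orbitP n x)

theorem closure_orbitP_zero_subset (hA : MemA f g) {x : ℝ} (hx : x ∈ unitI) :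
    closure (orbitP f g 0) ⊆ closure (orbitP f g x) :=
  closure_orbitP_subset_of_mem hA.f_c1.continuous hA.g_c1.continuous
    (zero_mem_closure_orbitP hA hx)

theorem isMinimalSet_closure_orbitP_zero (hA : MemA f g) :
    IsMinimalSet f g (closure (orbitP f g 0)) := by
  have h0 : (0 : ℝ) ∈ unitI := ⟨le_rfl, zero_le_one⟩
  have hK := closure_orbitP_subset_unitI hA.f_maps hA.g_maps h0
  refine ⟨⟨0, zero_mem_closure_orbitP hA h0⟩, hK, fun x hx => ?_⟩
  exact (closure_orbitP_subset_of_mem hA.f_c1.continuous hA.g_c1.continuous hx).antisymm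
    (closure_orbitP_zero_subset hA (hK hx))

theorem IsMinimalSet.eq_closure_orbitP_zero (hA : MemA f g) {K : Set ℝ}
    (hK : IsMinimalSet f g K) : K = closure (orbitP f g 0) := by
  obtain ⟨⟨x, hx⟩, hKI, hcl⟩ := hK
  have h0 : (0 : ℝ) ∈ K := hcl x hx ▸ zero_mem_closure_orbitP hA (hKI hx)
  exact (hcl 0 h0).symm

theorem closure_orbitP_zero_eq_one (hA : MemA f g) :
    closure (orbitP f g 0) = closure (orbitP f g 1) :=
  (closure_orbitP_zero_subset hA ⟨zero_le_one, le_rfl⟩).antisymm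
    (closure_orbitP_subset_of_mem hA.f_c1.continuous hA.g_c1.continuous
      (one_mem_closure_orbitP hA ⟨le_rfl, zero_le_one⟩))

/-- every `(f,g) ∈ 𝒜` has a unique minimal set `K`, and moreover
`K = closure O₊(0) = closure O₊(1)`. -/
theorem unique_minimal_set (f g : ℝ → ℝ) (hA : MemA f g) :
    ∃ K : Set ℝ, IsMinimalSet f g K ∧
      (∀ K' : Set ℝ, IsMinimalSet f g K' → K' = K) ∧
      K = closure (orbitP f g 0) ∧ K = closure (orbitP f g 1) :=
  ⟨closure (orbitP f g 0), isMinimalSet_closure_orbitP_zero hA,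
    fun _ hK' => hK'.eq_closure_orbitP_zero hA, rfl, closure_orbitP_zero_eq_one hA⟩

end IFSPaper
end
end

section
/- If (f,g) ∈ 𝒞, i.e. (f,g)∈𝒜 satisfies the single overlapping property (So), the hole property (Ho), the eventual expansion property (Ee) and the castration property (Ca), then the unique minimal set K of ⟨f,g⟩₊ is homeomorphic to the Cantor set (equivalently, K is nonempty, compact, perfect and totally disconnected). -/
/-!
`K` is compact as a closed subset of `I`, and perfect: it is the closure of the orbit of `0`, and
a point `φ 0` of that orbit is the limit of the points `φ (f^[n] (g 0))` of `K`.

The reflection `x ↦ 1 - x` exchanges `f` and `g` (and `𝓕` and `𝓖`), so each step below is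
proved on one side only. A point of `R_f ∩ f(K)` is `f (g^[k] t)` with `t ∈ K ∩ Hg`, and
`K ∩ Hg` is countable because the orbit of `0`, hence `K`, avoids the interiors of the holes.
So no interval of `K` ends at `g 0`, where `R_f` is a neighbourhood by `Ca`, and an interval of
`K` inside `W` lies in `f(K)` or in `g(K)`, again by `Ca`. An interval of `K ∩ f(K)` inside `F₁`
lies in the range of a single inverse branch `f ∘ g^[k]` of `𝓕` (otherwise it pulls back to an
interval of `K` ending at `g (g 0)`, and then to one ending at `g 0`), and off the countably many
points where `𝓕` lands in `Hf` that branch contracts by `μ`. Hence an interval of `K` in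
`F₁ ∪ G₁` yields one `μ` times longer, which is absurd; and every interval of `K` pulls back
along iterates of `g` or of `f` into `F₁ ∪ G₁`.
-/

open Set Function MeasureTheory

noncomputable section

namespace IFSPaper

open Filter Topology

lemma zero_mem_unitI : (0 : ℝ) ∈ unitI := ⟨le_rfl, zero_le_one⟩

lemma one_mem_unitI : (1 : ℝ) ∈ unitI := ⟨zero_le_one, le_rfl⟩

lemma Icc_subset_of_Ioo_diff_subset {u v : ℝ} {E C : Set ℝ} (huv : u < v) (hE : E.Countable)
    (hC : IsClosed C) (h : Ioo u v \ E ⊆ C) : Icc u v ⊆ C := by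
  have hIoo : Ioo u v ⊆ C :=
    ((hE.dense_compl ℝ).open_subset_closure_inter isOpen_Ioo).trans (hC.closure_subset_iff.2 h)
  rw [← closure_Ioo huv.ne]
  exact hC.closure_subset_iff.2 hIoo

lemma not_Ioo_subset_of_countable {u v : ℝ} {E : Set ℝ} (huv : u < v) (hE : E.Countable) :
    ¬ Ioo u v ⊆ E := fun h =>
  (Icc_subset_of_Ioo_diff_subset huv hE isClosed_empty (fun _ hx => hx.2 (h hx.1))
    (left_mem_Icc.2 huv.le)).elim

lemma Icc_subset_preimage_one_sub {u v : ℝ} {A : Set ℝ} :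
    Icc u v ⊆ (fun x => 1 - x) ⁻¹' A ↔ Icc (1 - v) (1 - u) ⊆ A := by
  have h : Icc u v = (fun x : ℝ => 1 - x) ⁻¹' Icc (1 - v) (1 - u) := by simp
  rw [h]
  exact (Equiv.subLeft (1 : ℝ)).surjective.preimage_subset_preimage_iff

lemma Icc_one_sub_subset_preimage_one_sub {u v : ℝ} {A : Set ℝ} :
    Icc (1 - v) (1 - u) ⊆ (fun x => 1 - x) ⁻¹' A ↔ Icc u v ⊆ A := by
  rw [Icc_subset_preimage_one_sub, sub_sub_cancel, sub_sub_cancel]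

lemma Ioo_one_sub_subset_preimage_one_sub {u v : ℝ} {A : Set ℝ} :
    Ioo (1 - v) (1 - u) ⊆ (fun x => 1 - x) ⁻¹' A ↔ Ioo u v ⊆ A := by
  have h : Ioo (1 - v) (1 - u) = (fun x : ℝ => 1 - x) ⁻¹' Ioo u v := by simp
  rw [h]
  exact (Equiv.subLeft (1 : ℝ)).surjective.preimage_subset_preimage_iff

lemma mul_sub_le_of_leftInverse_expanding {φ Φ : ℝ → ℝ} {μ p q : ℝ} {E : Set ℝ}
    (hφ : ContDiff ℝ 1 φ) (hμ : 0 < μ) (hpq : p < q) (hE : E.Countable)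
    (hinv : ∀ x ∈ Ioo p q, Φ (φ x) = x) (hφ' : ∀ x ∈ Ioo p q, deriv φ x ≠ 0)
    (hΦ' : ∀ x ∈ Ioo p q \ E, DifferentiableAt ℝ Φ (φ x) → μ < deriv Φ (φ x)) :
    μ * (φ q - φ p) ≤ q - p := by
  have hgood : Ioo p q \ E ⊆ {x | deriv φ x ≤ μ⁻¹} := by
    intro x hx
    have hφx : HasStrictDerivAt φ (deriv φ x) x := hφ.contDiffAt.hasStrictDerivAt one_ne_zero
    have hΦx : HasStrictDerivAt Φ (deriv φ x)⁻¹ (φ x) :=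
      hφx.to_local_left_inverse (hφ' x hx.1)
        (Filter.eventually_of_mem (isOpen_Ioo.mem_nhds hx.1) hinv)
    have hlt : μ < (deriv φ x)⁻¹ := hΦx.hasDerivAt.deriv ▸ hΦ' x hx hΦx.hasDerivAt.differentiableAt
    exact ((lt_inv_comm₀ hμ (inv_pos.1 (hμ.trans hlt))).1 hlt).le
  have hle : ∀ x ∈ interior (Icc p q), deriv φ x ≤ μ⁻¹ := fun x hx =>
    Icc_subset_of_Ioo_diff_subset hpq hE (isClosed_le (hφ.continuous_deriv le_rfl)
      continuous_const) hgood (interior_subset hx)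
  have hmvt := (convex_Icc p q).image_sub_le_mul_sub_of_deriv_le hφ.continuous.continuousOn
    (hφ.differentiable one_ne_zero).differentiableOn hle p (left_mem_Icc.2 hpq.le) q
    (right_mem_Icc.2 hpq.le) hpq.le
  calc μ * (φ q - φ p) ≤ μ * (μ⁻¹ * (q - p)) := mul_le_mul_of_nonneg_left hmvt hμ.le
    _ = q - p := by field_simp

lemma exists_iterate_eq_of_le_iterate {h : ℝ → ℝ} (hh : Continuous h) {p s : ℝ} (hp : p ≤ h p)
    (hs : p < s) {n : ℕ} (hn : s ≤ h^[n] (h p)) : ∃ k, ∃ t ∈ Ioc p (h p), h^[k] t = s := by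
  induction n with
  | zero => exact ⟨0, s, ⟨hs, hn⟩, rfl⟩
  | succ n ih =>
    by_cases hsn : s ≤ h^[n] (h p)
    · exact ih hsn
    · have hmem : s ∈ Ioc (h^[n + 1] p) (h^[n + 1] (h p)) := by
        rw [Function.iterate_succ_apply]
        exact ⟨lt_of_not_ge hsn, hn⟩
      obtain ⟨t, ht, rfl⟩ := intermediate_value_Ioc hp (hh.iterate _).continuousOn hmem
      exact ⟨n + 1, t, ht, rfl⟩

/-- The expression defining `calF` and `calG`. -/
lemma invFunOn_iterate_sInf_apply_branch {p q : ℝ → ℝ} {A : Set ℝ} {t : ℝ} {k : ℕ}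
    (hp : InjOn p unitI) (hq : InjOn q unitI) (hqI : MapsTo q unitI unitI) (ht : t ∈ unitI)
    (htA : t ∈ A) (hout : ∀ j, 0 < j → j ≤ k → q^[j] t ∉ A) :
    (invFunOn q unitI)^[sInf {n | (invFunOn q unitI)^[n] (invFunOn p unitI (p (q^[k] t))) ∈ A}]
      (invFunOn p unitI (p (q^[k] t))) = t := by
  have hback : ∀ j ≤ k, (invFunOn q unitI)^[j] (q^[k] t) = q^[k - j] t := by
    intro j hj
    induction j with
    | zero => rfl
    | succ j ih =>
      obtain ⟨i, hi⟩ : ∃ i, k - j = i + 1 := ⟨k - j - 1, by omega⟩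
      rw [Function.iterate_succ_apply', ih (by omega), hi, Function.iterate_succ_apply',
        hq.leftInvOn_invFunOn ((hqI.iterate i) ht), show k - (j + 1) = i by omega]
  rw [hp.leftInvOn_invFunOn ((hqI.iterate k) ht)]
  have hk : k ∈ {n | (invFunOn q unitI)^[n] (q^[k] t) ∈ A} := by
    simpa [hback k le_rfl] using htA
  have hsInf : sInf {n | (invFunOn q unitI)^[n] (q^[k] t) ∈ A} = k := by
    refine le_antisymm (Nat.sInf_le hk) (le_csInf ⟨k, hk⟩ fun j hj => ?_)
    by_contra hjk
    rw [mem_ofPred_eq, hback j (by omega)] at hj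
    exact hout (k - j) (by omega) (by omega) hj
  rw [hsInf, hback k le_rfl, Nat.sub_self]
  rfl

lemma contDiff_iterate {h : ℝ → ℝ} (hh : ContDiff ℝ 1 h) (k : ℕ) : ContDiff ℝ 1 h^[k] := by
  induction k with
  | zero => exact contDiff_id
  | succ k ih => rw [Function.iterate_succ']; exact hh.comp ih

lemma strictMonoOn_iterate {h : ℝ → ℝ} {s : Set ℝ} (hh : StrictMonoOn h s) (hs : MapsTo h s s)
    (k : ℕ) : StrictMonoOn h^[k] s := by
  induction k with
  | zero => exact strictMono_id.strictMonoOn s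
  | succ k ih => rw [Function.iterate_succ']; exact hh.comp ih (hs.iterate k)

lemma deriv_iterate_ne_zero {h : ℝ → ℝ} {s : Set ℝ} (hd : Differentiable ℝ h)
    (hs : MapsTo h s s) (h' : ∀ x ∈ s, deriv h x ≠ 0) (k : ℕ) {x : ℝ} (hx : x ∈ s) :
    deriv h^[k] x ≠ 0 := by
  induction k generalizing x with
  | zero => simp
  | succ k ih =>
    rw [Function.iterate_succ, deriv_comp x ((hd.iterate k) _) (hd x)]
    exact mul_ne_zero (ih (hs hx)) (h' x hx)

lemma StrictMonoOn.mem_Ioo_of_image_Icc {h : ℝ → ℝ} {s : Set ℝ} (hh : StrictMonoOn h s)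
    {c d c' d' y : ℝ} (hcd : Icc c d ⊆ s) (himg : h '' Icc c d = Icc c' d') (hy : y ∈ s)
    (hhy : h y ∈ Ioo c' d') : y ∈ Ioo c d := by
  obtain ⟨z, hz, hzy⟩ : h y ∈ h '' Icc c d := himg ▸ Ioo_subset_Icc_self hhy
  obtain rfl : z = y := hh.injOn (hcd hz) hy hzy
  have hc'd' : c' ≤ d' := hhy.1.le.trans hhy.2.le
  refine ⟨hz.1.lt_of_ne fun hcz => ?_, hz.2.lt_of_ne fun hzd => ?_⟩
  · obtain ⟨w, hw, hwc⟩ : c' ∈ h '' Icc c d := himg ▸ left_mem_Icc.2 hc'd'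
    have hzw : h z ≤ h w := hh.monotoneOn (hcd hz) (hcd hw) (hcz ▸ hw.1)
    exact absurd (hzw.trans hwc.le) (not_le.2 hhy.1)
  · obtain ⟨w, hw, hwd⟩ : d' ∈ h '' Icc c d := himg ▸ right_mem_Icc.2 hc'd'
    have hwz : h w ≤ h z := hh.monotoneOn (hcd hw) (hcd hz) (hzd ▸ hw.2)
    exact absurd (hwd.ge.trans hwz) (not_le.2 hhy.2)

/-- Conjugating by `x ↦ 1 - x` exchanges the roles of `f` and `g`. -/
def mirror (h : ℝ → ℝ) (x : ℝ) : ℝ := 1 - h (1 - x)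

@[simp] lemma mirror_apply (h : ℝ → ℝ) (x : ℝ) : mirror h x = 1 - h (1 - x) := rfl

lemma mirror_iterate (h : ℝ → ℝ) (k : ℕ) : (mirror h)^[k] = mirror h^[k] := by
  induction k with
  | zero => funext x; simp
  | succ k ih =>
    funext x
    rw [Function.iterate_succ_apply', ih]
    simp only [mirror_apply, sub_sub_cancel, Function.iterate_succ_apply']

lemma deriv_mirror (h : ℝ → ℝ) (x : ℝ) : deriv (mirror h) x = deriv h (1 - x) := by
  change deriv (fun y => 1 - h (1 - y)) x = _
  rw [deriv_const_sub, deriv_comp_const_sub, neg_neg]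

lemma differentiableAt_mirror {h : ℝ → ℝ} {x : ℝ} :
    DifferentiableAt ℝ (mirror h) x ↔ DifferentiableAt ℝ h (1 - x) := by
  rw [← differentiableAt_comp_const_sub]
  refine ⟨fun hd => ?_, fun hd => hd.const_sub 1⟩
  simpa using hd.const_sub 1

lemma image_mirror_preimage (h : ℝ → ℝ) (A : Set ℝ) :
    mirror h '' ((fun x => 1 - x) ⁻¹' A) = (fun x => 1 - x) ⁻¹' (h '' A) := by
  ext x
  constructor
  · rintro ⟨y, hy, rfl⟩
    exact ⟨1 - y, hy, by simp⟩
  · rintro ⟨y, hy, hyx⟩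
    exact ⟨1 - y, by simpa using hy, by simp [hyx]⟩

lemma one_sub_mem_unitI {x : ℝ} : 1 - x ∈ unitI ↔ x ∈ unitI := by
  simp only [unitI, mem_Icc]
  constructor <;> rintro ⟨h0, h1⟩ <;> constructor <;> linarith

lemma So.mirror {f g : ℝ → ℝ} (h : So f g) : So (mirror g) (mirror f) := by
  obtain ⟨h1, h2⟩ := h
  constructor <;> simp <;> linarith

namespace MemA

variable {f g : ℝ → ℝ} (hA : MemA f g)
include hA

lemma continuous_f : Continuous f := hA.f_c1.continuous

lemma continuous_g : Continuous g := hA.g_c1.continuous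

lemma strictMonoOn_f : StrictMonoOn f unitI :=
  hA.continuous_f.continuousOn.strictMonoOn_of_injOn_Icc zero_le_one
    (by rw [hA.f_zero]; linarith [hA.g0_pos, hA.g0_lt_f1]) hA.f_inj

lemma strictMonoOn_g : StrictMonoOn g unitI :=
  hA.continuous_g.continuousOn.strictMonoOn_of_injOn_Icc zero_le_one
    (by rw [hA.g_one]; linarith [hA.g0_lt_f1, hA.f1_lt_one]) hA.g_inj

protected lemma mirror : MemA (mirror g) (mirror f) where
  f_maps x hx := one_sub_mem_unitI.2 (hA.g_maps (one_sub_mem_unitI.2 hx))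
  g_maps x hx := one_sub_mem_unitI.2 (hA.f_maps (one_sub_mem_unitI.2 hx))
  f_c1 := contDiff_const.sub (hA.g_c1.comp (contDiff_const.sub contDiff_id))
  g_c1 := contDiff_const.sub (hA.f_c1.comp (contDiff_const.sub contDiff_id))
  f_inj x hx y hy hxy := by
    simpa using hA.g_inj (one_sub_mem_unitI.2 hx) (one_sub_mem_unitI.2 hy) (by simpa using hxy)
  g_inj x hx y hy hxy := by
    simpa using hA.f_inj (one_sub_mem_unitI.2 hx) (one_sub_mem_unitI.2 hy) (by simpa using hxy)
  f_deriv_ne x hx := by rw [deriv_mirror]; exact hA.g_deriv_ne _ (one_sub_mem_unitI.2 hx)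
  g_deriv_ne x hx := by rw [deriv_mirror]; exact hA.f_deriv_ne _ (one_sub_mem_unitI.2 hx)
  f_zero := by simp [hA.g_one]
  g_one := by simp [hA.f_zero]
  f_lt_id x hx := by
    have := hA.id_lt_g (1 - x) ⟨by linarith [hx.2], by linarith [hx.1]⟩
    simp only [mirror_apply]; linarith
  id_lt_g x hx := by
    have := hA.f_lt_id (1 - x) ⟨by linarith [hx.2], by linarith [hx.1]⟩
    simp only [mirror_apply]; linarith
  g0_pos := by simp [hA.f1_lt_one]
  g0_lt_f1 := by simp [hA.g0_lt_f1]
  f1_lt_one := by simp [hA.g0_pos]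

lemma le_g {x : ℝ} (hx : x ∈ unitI) : x ≤ g x := by
  rcases hx.2.lt_or_eq with h1 | rfl
  · rcases hx.1.lt_or_eq with h0 | rfl
    · exact (hA.id_lt_g x ⟨h0, h1⟩).le
    · exact hA.g0_pos.le
  · rw [hA.g_one]

lemma f_le {x : ℝ} (hx : x ∈ unitI) : f x ≤ x := by
  rcases hx.1.lt_or_eq with h0 | rfl
  · rcases hx.2.lt_or_eq with h1 | rfl
    · exact (hA.f_lt_id x ⟨h0, h1⟩).le
    · exact hA.f1_lt_one.le
  · rw [hA.f_zero]

lemma le_iterate_g {x : ℝ} (hx : x ∈ unitI) (k : ℕ) : x ≤ g^[k] x := by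
  induction k with
  | zero => rfl
  | succ k ih =>
    rw [Function.iterate_succ_apply']
    exact ih.trans (hA.le_g ((hA.g_maps.iterate k) hx))

lemma iterate_f_le {x : ℝ} (hx : x ∈ unitI) (k : ℕ) : f^[k] x ≤ x := by
  induction k with
  | zero => rfl
  | succ k ih =>
    rw [Function.iterate_succ_apply']
    exact (hA.f_le ((hA.f_maps.iterate k) hx)).trans ih

lemma g_g0_lt_iterate {x : ℝ} (hx : x ∈ unitI) (h : g 0 < x) {k : ℕ} (hk : k ≠ 0) :
    g (g 0) < g^[k] x := by
  obtain ⟨j, rfl⟩ := Nat.exists_eq_succ_of_ne_zero hk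
  rw [Function.iterate_succ_apply]
  exact (hA.strictMonoOn_g ⟨hA.g0_pos.le, h.le.trans hx.2⟩ hx h).trans_le
    (hA.le_iterate_g (hA.g_maps hx) j)

lemma iterate_lt_f_f1 {x : ℝ} (hx : x ∈ unitI) (h : x < f 1) {k : ℕ} (hk : k ≠ 0) :
    f^[k] x < f (f 1) := by
  obtain ⟨j, rfl⟩ := Nat.exists_eq_succ_of_ne_zero hk
  rw [Function.iterate_succ_apply]
  have hf1 : f 1 ∈ unitI := hA.f_maps one_mem_unitI
  exact (hA.iterate_f_le (hA.f_maps hx) j).trans_lt (hA.strictMonoOn_f hx hf1 h)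

lemma tendsto_iterate_g {x : ℝ} (hx : x ∈ unitI) (hx0 : 0 < x) :
    Tendsto (fun n => g^[n] x) atTop (𝓝 1) := by
  have hmono : Monotone fun n => g^[n] x := monotone_nat_of_le_succ fun n => by
    rw [Function.iterate_succ_apply']
    exact hA.le_g ((hA.g_maps.iterate n) hx)
  have hbdd : BddAbove (range fun n => g^[n] x) := ⟨1, by
    rintro _ ⟨n, rfl⟩
    exact ((hA.g_maps.iterate n) hx).2⟩
  have hlim := tendsto_atTop_ciSup hmono hbdd
  set L := ⨆ n, g^[n] x
  have hxL : x ≤ L := hmono.ge_of_tendsto hlim 0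
  have hL1 : L ≤ 1 := ciSup_le fun n => ((hA.g_maps.iterate n) hx).2
  have hfix : g L = L := isFixedPt_of_tendsto_iterate hlim hA.continuous_g.continuousAt
  rcases hL1.lt_or_eq with hL1 | hL1
  · exact absurd hfix (hA.id_lt_g L ⟨hx0.trans_le hxL, hL1⟩).ne'
  · rwa [hL1] at hlim

lemma tendsto_iterate_f {x : ℝ} (hx : x ∈ unitI) (hx1 : x < 1) :
    Tendsto (fun n => f^[n] x) atTop (𝓝 0) := by
  have h := (hA.mirror.tendsto_iterate_g (one_sub_mem_unitI.2 hx) (by linarith)).const_sub 1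
  simpa [mirror_iterate] using h

lemma mapsTo_word (w : List Bool) : MapsTo (word f g w) unitI unitI := by
  induction w with
  | nil => exact mapsTo_id _
  | cons c w ih =>
    cases c
    · exact hA.g_maps.comp ih
    · exact hA.f_maps.comp ih

lemma strictMonoOn_word (w : List Bool) : StrictMonoOn (word f g w) unitI := by
  induction w with
  | nil => exact strictMono_id.strictMonoOn _
  | cons c w ih =>
    cases c
    · exact hA.strictMonoOn_g.comp ih (hA.mapsTo_word w)
    · exact hA.strictMonoOn_f.comp ih (hA.mapsTo_word w)

lemma continuous_word (w : List Bool) : Continuous (word f g w) := by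
  induction w with
  | nil => exact continuous_id
  | cons c w ih =>
    cases c
    · exact hA.continuous_g.comp ih
    · exact hA.continuous_f.comp ih

lemma calF_branch (k : ℕ) {t : ℝ} (ht : t ∈ Ioc (g 0) (g (g 0))) : calF f g (f (g^[k] t)) = t := by
  have htI : t ∈ unitI := ⟨hA.g0_pos.le.trans ht.1.le, ht.2.trans (hA.g_maps (hA.g_maps
    zero_mem_unitI)).2⟩
  exact invFunOn_iterate_sInf_apply_branch hA.f_inj hA.g_inj hA.g_maps htI
    (Ioc_subset_Icc_self ht) fun j hj _ hjA => (hA.g_g0_lt_iterate htI ht.1 hj.ne').not_ge hjA.2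

lemma calG_branch (k : ℕ) {t : ℝ} (ht : t ∈ Ico (f (f 1)) (f 1)) : calG f g (g (f^[k] t)) = t := by
  have htI : t ∈ unitI := ⟨(hA.f_maps (hA.f_maps one_mem_unitI)).1.trans ht.1,
    ht.2.le.trans (hA.f_maps one_mem_unitI).2⟩
  exact invFunOn_iterate_sInf_apply_branch hA.g_inj hA.f_inj hA.f_maps htI
    (Ico_subset_Icc_self ht) fun j hj _ hjA => (hA.iterate_lt_f_f1 htI ht.2 hj.ne').not_ge hjA.1

/-- `f` and `g` exchange the holes, and `g(I)`, `f(I)` miss `Hf`, `Hg` respectively. -/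
lemma word_zero_not_mem_holes {c₁ d₁ c₂ d₂ : ℝ} (hH : HoleAt f g (Icc c₁ d₁) (Icc c₂ d₂))
    (w : List Bool) : word f g w 0 ∉ Ioo c₁ d₁ ∧ word f g w 0 ∉ Ioo c₂ d₂ := by
  obtain ⟨-, -, hFsub, hGsub, himg_g, himg_f⟩ := hH
  have hHf : ∀ x ∈ Icc c₁ d₁, 0 ≤ x ∧ x < g 0 := fun x hx => by
    obtain ⟨⟨hx1, hx2⟩, hxW⟩ := interior_subset (hFsub hx)
    exact ⟨(hA.f_maps (hA.f_maps one_mem_unitI)).1.trans hx1, lt_of_not_ge fun h => hxW ⟨h, hx2⟩⟩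
  have hHg : ∀ x ∈ Icc c₂ d₂, f 1 < x ∧ x ≤ 1 := fun x hx => by
    obtain ⟨⟨hx1, hx2⟩, hxW⟩ := interior_subset (hGsub hx)
    exact ⟨lt_of_not_ge fun h => hxW ⟨hx1, h⟩, hx2.trans (hA.g_maps (hA.g_maps zero_mem_unitI)).2⟩
  have hHfI : Icc c₁ d₁ ⊆ unitI := fun x hx =>
    ⟨(hHf x hx).1, (hHf x hx).2.le.trans (hA.g_maps zero_mem_unitI).2⟩
  have hHgI : Icc c₂ d₂ ⊆ unitI := fun x hx =>
    ⟨(hA.f_maps one_mem_unitI).1.trans (hHg x hx).1.le, (hHg x hx).2⟩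
  induction w with
  | nil =>
    exact ⟨fun h => (hHf c₁ ⟨le_rfl, (h.1.trans h.2).le⟩).1.not_gt h.1,
      fun h => ((hA.f_maps one_mem_unitI).1.trans_lt
        (hHg c₂ ⟨le_rfl, (h.1.trans h.2).le⟩).1).not_gt h.1⟩
  | cons c w ih =>
    have hy := hA.mapsTo_word w zero_mem_unitI
    cases c
    · refine ⟨fun h => ?_, fun h =>
        ih.1 (StrictMonoOn.mem_Ioo_of_image_Icc hA.strictMonoOn_g hHfI himg_g hy h)⟩
      exact (hHf _ (Ioo_subset_Icc_self h)).2.not_ge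
        (hA.strictMonoOn_g.monotoneOn zero_mem_unitI hy hy.1)
    · refine ⟨fun h =>
        ih.2 (StrictMonoOn.mem_Ioo_of_image_Icc hA.strictMonoOn_f hHgI himg_f hy h), fun h => ?_⟩
      exact (hHg _ (Ioo_subset_Icc_self h)).1.not_ge
        (hA.strictMonoOn_f.monotoneOn hy one_mem_unitI hy.2)

end MemA

namespace IsMinimalSet

variable {f g : ℝ → ℝ} {K : Set ℝ} (hK : IsMinimalSet f g K)
include hK

lemma isClosed : IsClosed K := by
  obtain ⟨x, hx⟩ := hK.1
  rw [← hK.2.2 x hx]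
  exact isClosed_closure

lemma isCompact : IsCompact K := isCompact_Icc.of_isClosed_subset hK.isClosed hK.2.1

lemma word_mem {x : ℝ} (hx : x ∈ K) (w : List Bool) : word f g w x ∈ K := by
  rcases eq_or_ne w [] with rfl | hw
  · exact hx
  · rw [← hK.2.2 x hx]
    exact subset_closure ⟨w, hw, rfl⟩

lemma zero_mem (hA : MemA f g) : (0 : ℝ) ∈ K := by
  obtain ⟨m, hm, hmin⟩ := hK.isCompact.exists_isLeast hK.1
  have hmI := hK.2.1 hm
  have hfm : m ≤ f m := hmin (hK.word_mem hm [true])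
  rcases hmI.1.lt_or_eq with h0 | h0
  · rcases hmI.2.lt_or_eq with h1 | rfl
    · exact ((hA.f_lt_id m ⟨h0, h1⟩).not_ge hfm).elim
    · exact (hA.f1_lt_one.not_ge hfm).elim
  · exact h0 ▸ hm

lemma image_union (hA : MemA f g) : f '' K ∪ g '' K = K := by
  refine Subset.antisymm (union_subset (image_subset_iff.2 fun x hx => hK.word_mem hx [true])
    (image_subset_iff.2 fun x hx => hK.word_mem hx [false])) ?_
  intro x hx
  rw [← hK.2.2 0 (hK.zero_mem hA)] at hx
  refine closure_minimal ?_ ((hK.isCompact.image hA.continuous_f).union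
    (hK.isCompact.image hA.continuous_g)).isClosed hx
  rintro _ ⟨w, hw, rfl⟩
  obtain ⟨c, w, rfl⟩ := List.exists_cons_of_ne_nil hw
  have hw0 := hK.word_mem (hK.zero_mem hA) w
  cases c
  · exact Or.inr ⟨_, hw0, rfl⟩
  · exact Or.inl ⟨_, hw0, rfl⟩

lemma perfect (hA : MemA f g) : Perfect K := by
  have h0 := hK.zero_mem hA
  refine ⟨hK.isClosed, fun x hx => accPt_iff_nhds.2 fun U hU => ?_⟩
  by_cases hword : ∃ w, word f g w 0 = x
  · obtain ⟨w, rfl⟩ := hword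
    have ha : g 0 ∈ unitI := hA.g_maps zero_mem_unitI
    have hlim : Tendsto (fun n => word f g w (f^[n] (g 0))) atTop (𝓝 (word f g w 0)) :=
      ((hA.continuous_word w).tendsto 0).comp
        (hA.tendsto_iterate_f ha (hA.g0_lt_f1.trans hA.f1_lt_one))
    obtain ⟨n, hn⟩ := (hlim.eventually_mem hU).exists
    have hfn : ∀ m, f^[m] (g 0) ∈ K := by
      intro m
      induction m with
      | zero => exact hK.word_mem h0 [false]
      | succ m ih => rw [Function.iterate_succ_apply']; exact hK.word_mem ih [true]
    refine ⟨_, ⟨hn, hK.word_mem (hfn n) w⟩, fun heq => ?_⟩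
    have hzero := (hA.strictMonoOn_word w).injOn (hA.f_maps.iterate n ha) zero_mem_unitI heq
    exact hA.g0_pos.ne' ((strictMonoOn_iterate hA.strictMonoOn_f hA.f_maps n).injOn ha
      zero_mem_unitI (hzero.trans (Function.iterate_fixed hA.f_zero n).symm))
  · obtain ⟨y, hyU, w, -, rfl⟩ :=
      mem_closure_iff_nhds.1 ((hK.2.2 0 h0).symm ▸ hx : x ∈ closure (orbitP f g 0)) U hU
    exact ⟨_, ⟨hyU, hK.word_mem h0 w⟩, fun heq => hword ⟨w, heq⟩⟩

lemma countable_inter_Icc {c d : ℝ} (h0 : (0 : ℝ) ∈ K) (hcd : c ≤ d)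
    (horb : ∀ w, word f g w 0 ∉ Ioo c d) : (K ∩ Icc c d).Countable := by
  have hdisj : K ∩ Ioo c d = ∅ := by
    rw [← hK.2.2 0 h0, ← not_nonempty_iff_eq_empty, closure_inter_open_nonempty_iff isOpen_Ioo]
    rintro ⟨_, ⟨w, -, rfl⟩, hw⟩
    exact horb w hw
  refine ((finite_singleton d).insert c).countable.mono fun x hx => ?_
  rw [← Icc_sdiff_Ioo_same hcd]
  exact ⟨hx.2, fun h => (eq_empty_iff_forall_notMem.1 hdisj x) ⟨hx.1, h⟩⟩

lemma countable_inter_holes {Hf Hg : Set ℝ} (hA : MemA f g) (hH : HoleAt f g Hf Hg) :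
    (K ∩ Hf).Countable ∧ (K ∩ Hg).Countable := by
  obtain ⟨⟨c₁, d₁, h₁, rfl⟩, ⟨c₂, d₂, h₂, rfl⟩, -⟩ := id hH
  exact ⟨hK.countable_inter_Icc (hK.zero_mem hA) h₁.le fun w => (hA.word_zero_not_mem_holes hH w).1,
    hK.countable_inter_Icc (hK.zero_mem hA) h₂.le fun w => (hA.word_zero_not_mem_holes hH w).2⟩

end IsMinimalSet

def ruinationF (f Φ : ℝ → ℝ) (Hg : Set ℝ) : Set ℝ := {x | x ∈ Ico (f (f 1)) (f 1) ∧ Φ x ∈ Hg}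

def ruinationG (g Ψ : ℝ → ℝ) (Hf : Set ℝ) : Set ℝ := {x | x ∈ Ioc (g 0) (g (g 0)) ∧ Ψ x ∈ Hf}

lemma ruinationF_mirror (g Ψ : ℝ → ℝ) (Hf : Set ℝ) :
    ruinationF (mirror g) (mirror Ψ) ((fun x => 1 - x) ⁻¹' Hf) =
      (fun x => 1 - x) ⁻¹' ruinationG g Ψ Hf := by
  ext x
  simp only [ruinationF, ruinationG, mirror_apply, sub_sub_cancel, sub_self, mem_preimage,
    mem_ofPred_eq, mem_Ico, mem_Ioc]
  constructor <;> rintro ⟨⟨h1, h2⟩, h3⟩ <;> exact ⟨⟨by linarith, by linarith⟩, h3⟩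

lemma ruinationG_mirror (f Φ : ℝ → ℝ) (Hg : Set ℝ) :
    ruinationG (mirror f) (mirror Φ) ((fun x => 1 - x) ⁻¹' Hg) =
      (fun x => 1 - x) ⁻¹' ruinationF f Φ Hg := by
  ext x
  simp only [ruinationF, ruinationG, mirror_apply, sub_sub_cancel, sub_zero, mem_preimage,
    mem_ofPred_eq, mem_Ico, mem_Ioc]
  constructor <;> rintro ⟨⟨h1, h2⟩, h3⟩ <;> exact ⟨⟨by linarith, by linarith⟩, h3⟩

lemma interior_preimage_one_sub (s : Set ℝ) :
    interior ((fun x : ℝ => 1 - x) ⁻¹' s) = (fun x => 1 - x) ⁻¹' interior s := by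
  simpa using ((Homeomorph.subLeft (1 : ℝ)).preimage_interior s).symm

/-- The hypotheses of the theorem, in a form closed under `Setting.reflect`: the induced maps
`𝓕`, `𝓖` enter only through the facts that they invert the branches `f ∘ g^[k]`, `g ∘ f^[k]`
and expand, and the minimal set only through its self-similarity and its meeting the holes in
countably many points. -/
structure Setting where
  f : ℝ → ℝ
  g : ℝ → ℝ
  memA : MemA f g
  so : So f g
  K : Set ℝ
  isClosed_K : IsClosed K
  K_subset : K ⊆ unitI
  image_union : f '' K ∪ g '' K = K
  Hf : Set ℝ
  Hg : Set ℝ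
  countable_K_inter_Hf : (K ∩ Hf).Countable
  countable_K_inter_Hg : (K ∩ Hg).Countable
  Φ : ℝ → ℝ
  Ψ : ℝ → ℝ
  Φ_branch : ∀ k t, t ∈ Ioc (g 0) (g (g 0)) → Φ (f (g^[k] t)) = t
  Ψ_branch : ∀ k t, t ∈ Ico (f (f 1)) (f 1) → Ψ (g (f^[k] t)) = t
  μ : ℝ
  one_lt_μ : 1 < μ
  expanding_Φ : ∀ y ∈ Icc (f (f 1)) (f 1) \ Hf, DifferentiableAt ℝ Φ y → μ < deriv Φ y
  expanding_Ψ : ∀ y ∈ Icc (g 0) (g (g 0)) \ Hg, DifferentiableAt ℝ Ψ y → μ < deriv Ψ y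
  castration : Icc (g 0) (f 1) ⊆ interior (ruinationF f Φ Hg) ∪ interior (ruinationG g Ψ Hf)

namespace Setting

def reflect (S : Setting) : Setting where
  f := mirror S.g
  g := mirror S.f
  memA := S.memA.mirror
  so := S.so.mirror
  K := (fun x => 1 - x) ⁻¹' S.K
  isClosed_K := S.isClosed_K.preimage (continuous_const.sub continuous_id)
  K_subset _ hx := one_sub_mem_unitI.1 (S.K_subset hx)
  image_union := by
    rw [image_mirror_preimage, image_mirror_preimage, ← preimage_union, union_comm, S.image_union]
  Hf := (fun x => 1 - x) ⁻¹' S.Hg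
  Hg := (fun x => 1 - x) ⁻¹' S.Hf
  countable_K_inter_Hf := S.countable_K_inter_Hg.preimage (sub_right_injective (b := (1 : ℝ)))
  countable_K_inter_Hg := S.countable_K_inter_Hf.preimage (sub_right_injective (b := (1 : ℝ)))
  Φ := mirror S.Ψ
  Ψ := mirror S.Φ
  Φ_branch k t ht := by
    simp only [mirror_iterate, mirror_apply, sub_sub_cancel, sub_zero, mem_Ioc] at ht ⊢
    rw [S.Ψ_branch k (1 - t) ⟨by linarith, by linarith⟩, sub_sub_cancel]
  Ψ_branch k t ht := by
    simp only [mirror_iterate, mirror_apply, sub_sub_cancel, sub_self, mem_Ico] at ht ⊢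
    rw [S.Φ_branch k (1 - t) ⟨by linarith, by linarith⟩, sub_sub_cancel]
  μ := S.μ
  one_lt_μ := S.one_lt_μ
  expanding_Φ y hy hd := by
    simp only [mirror_apply, sub_sub_cancel, sub_self, Set.mem_sdiff, mem_Icc, mem_preimage] at hy
    rw [deriv_mirror]
    exact S.expanding_Ψ (1 - y) ⟨⟨by linarith, by linarith⟩, hy.2⟩ (differentiableAt_mirror.1 hd)
  expanding_Ψ y hy hd := by
    simp only [mirror_apply, sub_sub_cancel, sub_zero, Set.mem_sdiff, mem_Icc, mem_preimage] at hy
    rw [deriv_mirror]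
    exact S.expanding_Φ (1 - y) ⟨⟨by linarith, by linarith⟩, hy.2⟩ (differentiableAt_mirror.1 hd)
  castration := by
    rw [ruinationF_mirror, ruinationG_mirror, interior_preimage_one_sub,
      interior_preimage_one_sub, ← preimage_union, union_comm]
    intro x hx
    simp only [mirror_apply, sub_zero, sub_self, mem_Icc] at hx
    exact S.castration ⟨by linarith, by linarith⟩

variable (S : Setting)

-- `W = [a, b]`, `F₁ = [b2, b]` and `G₁ = [a, a2]`.
def a : ℝ := S.g 0
def b : ℝ := S.f 1
def a2 : ℝ := S.g S.a
def b2 : ℝ := S.f S.b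

def Rf : Set ℝ := ruinationF S.f S.Φ S.Hg

def Rg : Set ℝ := ruinationG S.g S.Ψ S.Hf

def core : Set ℝ := Icc S.b2 S.a2

def HasCoreInterval (ℓ : ℝ) : Prop := ∃ u v, u < v ∧ ℓ ≤ v - u ∧ Icc u v ⊆ S.K ∩ S.core

def branch (k : ℕ) (t : ℝ) : ℝ := S.f (S.g^[k] t)

lemma reflect_a : S.reflect.a = 1 - S.b := by simp [a, b, reflect]
lemma reflect_a2 : S.reflect.a2 = 1 - S.b2 := by simp [a, b, a2, b2, reflect]
lemma reflect_b2 : S.reflect.b2 = 1 - S.a2 := by simp [a, b, a2, b2, reflect]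

lemma reflect_K : S.reflect.K = (fun x => 1 - x) ⁻¹' S.K := rfl

lemma reflect_μ : S.reflect.μ = S.μ := rfl

lemma reflect_image_f : S.reflect.f '' S.reflect.K = (fun x => 1 - x) ⁻¹' (S.g '' S.K) :=
  image_mirror_preimage _ _

lemma reflect_image_g : S.reflect.g '' S.reflect.K = (fun x => 1 - x) ⁻¹' (S.f '' S.K) :=
  image_mirror_preimage _ _

lemma reflect_Rf : S.reflect.Rf = (fun x => 1 - x) ⁻¹' S.Rg :=
  ruinationF_mirror S.g S.Ψ S.Hf

lemma reflect_K_inter_core :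
    S.reflect.K ∩ S.reflect.core = (fun x => 1 - x) ⁻¹' (S.K ∩ S.core) := by
  ext x
  simp only [core, reflect_b2, reflect_a2, reflect_K, mem_inter_iff, mem_preimage, mem_Icc]
  constructor <;> rintro ⟨h1, h2, h3⟩ <;> exact ⟨h1, by linarith, by linarith⟩

lemma a_pos : 0 < S.a := S.memA.g0_pos
lemma a_lt_b : S.a < S.b := S.memA.g0_lt_f1
lemma b_lt_one : S.b < 1 := S.memA.f1_lt_one
lemma b2_lt_a : S.b2 < S.a := S.so.1
lemma b_lt_a2 : S.b < S.a2 := S.so.2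
lemma a_lt_a2 : S.a < S.a2 := S.a_lt_b.trans S.b_lt_a2
lemma a_mem : S.a ∈ unitI := ⟨S.a_pos.le, (S.a_lt_b.trans S.b_lt_one).le⟩

lemma b_mem : S.b ∈ unitI := ⟨(S.a_pos.trans S.a_lt_b).le, S.b_lt_one.le⟩

lemma a2_lt_one : S.a2 < 1 := by
  have := S.memA.strictMonoOn_g S.a_mem one_mem_unitI (S.a_lt_b.trans S.b_lt_one)
  rwa [S.memA.g_one] at this

lemma Icc_a_a2_subset : Icc S.a S.a2 ⊆ unitI :=
  Icc_subset_Icc S.a_pos.le S.a2_lt_one.le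

lemma a2_mem : S.a2 ∈ unitI := S.Icc_a_a2_subset (right_mem_Icc.2 S.a_lt_a2.le)

lemma b2_nonneg : 0 ≤ S.b2 := (S.memA.f_maps S.b_mem).1

lemma isCompact_K : IsCompact S.K := isCompact_Icc.of_isClosed_subset S.isClosed_K S.K_subset

lemma image_f_subset : S.f '' S.K ⊆ S.K := subset_union_left.trans S.image_union.le

lemma isClosed_image_g : IsClosed (S.g '' S.K) :=
  (S.isCompact_K.image S.memA.continuous_g).isClosed

lemma le_b_of_mem_image_f {y : ℝ} (hy : y ∈ S.f '' S.K) : y ≤ S.b := by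
  obtain ⟨x, hx, rfl⟩ := hy
  exact S.memA.strictMonoOn_f.monotoneOn (S.K_subset hx) one_mem_unitI (S.K_subset hx).2

lemma a_le_of_mem_image_g {y : ℝ} (hy : y ∈ S.g '' S.K) : S.a ≤ y := by
  obtain ⟨x, hx, rfl⟩ := hy
  exact S.memA.strictMonoOn_g.monotoneOn zero_mem_unitI (S.K_subset hx) (S.K_subset hx).1

lemma mem_image_f_of_lt_a {y : ℝ} (hy : y ∈ S.K) (ha : y < S.a) : y ∈ S.f '' S.K := by
  rw [← S.image_union] at hy
  exact hy.resolve_right fun h => (S.a_le_of_mem_image_g h).not_gt ha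

lemma mem_image_g_of_b_lt {y : ℝ} (hy : y ∈ S.K) (hb : S.b < y) : y ∈ S.g '' S.K := by
  rw [← S.image_union] at hy
  exact hy.resolve_left fun h => (S.le_b_of_mem_image_f h).not_gt hb

lemma mem_of_g_mem {r : ℝ} (hr : r ∈ unitI) (hb : S.b < S.g r) (h : S.g r ∈ S.K) : r ∈ S.K := by
  obtain ⟨x, hx, hxr⟩ := S.mem_image_g_of_b_lt h hb
  exact S.memA.g_inj (S.K_subset hx) hr hxr ▸ hx

lemma mem_of_iterate_g_mem {r : ℝ} (hr : r ∈ unitI) (ha : S.a ≤ r) {k : ℕ}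
    (h : S.g^[k] r ∈ S.K) : r ∈ S.K := by
  induction k generalizing r with
  | zero => exact h
  | succ k ih =>
    rw [Function.iterate_succ_apply] at h
    have ha2 : S.a2 ≤ S.g r := S.memA.strictMonoOn_g.monotoneOn S.a_mem hr ha
    exact S.mem_of_g_mem hr (S.b_lt_a2.trans_le ha2)
      (ih (S.memA.g_maps hr) (ha.trans (S.memA.le_g hr)) h)

lemma continuous_branch (k : ℕ) : Continuous (S.branch k) :=
  S.memA.continuous_f.comp (S.memA.continuous_g.iterate k)

lemma contDiff_branch (k : ℕ) : ContDiff ℝ 1 (S.branch k) :=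
  S.memA.f_c1.comp (contDiff_iterate S.memA.g_c1 k)

lemma strictMonoOn_branch (k : ℕ) : StrictMonoOn (S.branch k) unitI :=
  S.memA.strictMonoOn_f.comp (strictMonoOn_iterate S.memA.strictMonoOn_g S.memA.g_maps k)
    (S.memA.g_maps.iterate k)

lemma deriv_branch_ne_zero (k : ℕ) {x : ℝ} (hx : x ∈ unitI) : deriv (S.branch k) x ≠ 0 := by
  have hg := S.memA.g_c1.differentiable one_ne_zero
  change deriv (S.f ∘ S.g^[k]) x ≠ 0
  rw [deriv_comp x ((S.memA.f_c1.differentiable one_ne_zero) _) ((hg.iterate k) x)]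
  exact mul_ne_zero (S.memA.f_deriv_ne _ ((S.memA.g_maps.iterate k) hx))
    (deriv_iterate_ne_zero hg S.memA.g_maps S.memA.g_deriv_ne k hx)

lemma mapsTo_branch {q t : ℝ} (h : Icc q t ⊆ Icc S.a S.a2) (k : ℕ) :
    MapsTo (S.branch k) (Icc q t) (Icc (S.branch k q) (S.branch k t)) :=
  ((S.strictMonoOn_branch k).monotoneOn.mono (h.trans S.Icc_a_a2_subset)).mapsTo_Icc

lemma Φ_branch_apply (k : ℕ) {t : ℝ} (ht : t ∈ Ioc S.a S.a2) : S.Φ (S.branch k t) = t :=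
  S.Φ_branch k t ht

lemma branch_succ_a (k : ℕ) : S.branch (k + 1) S.a = S.branch k S.a2 := by
  rw [branch, Function.iterate_succ_apply]
  rfl

lemma branch_le_b (k : ℕ) {t : ℝ} (ht : t ∈ unitI) : S.branch k t ≤ S.b :=
  S.memA.strictMonoOn_f.monotoneOn ((S.memA.g_maps.iterate k) ht) one_mem_unitI
    ((S.memA.g_maps.iterate k) ht).2

lemma tendsto_branch_a2 : Tendsto (fun k => S.branch k S.a2) atTop (𝓝 S.b) :=
  (S.memA.continuous_f.tendsto 1).comp (S.memA.tendsto_iterate_g S.a2_mem (S.a_pos.trans S.a_lt_a2))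

lemma exists_branch {y : ℝ} (hy : y ∈ Ico S.b2 S.b) :
    ∃ k, ∃ t ∈ Ioc S.a S.a2, S.branch k t = y := by
  obtain ⟨s, hs, rfl⟩ :=
    intermediate_value_Ico S.b_lt_one.le S.memA.continuous_f.continuousOn hy
  obtain ⟨n, hn⟩ :=
    ((S.memA.tendsto_iterate_g S.a2_mem (S.a_pos.trans S.a_lt_a2)).eventually_const_lt hs.2).exists
  obtain ⟨k, t, ht, hts⟩ := exists_iterate_eq_of_le_iterate S.memA.continuous_g
    (S.memA.le_g S.a_mem) (S.a_lt_b.trans_le hs.1) hn.le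
  exact ⟨k, t, ht, by rw [branch, hts]⟩

lemma mem_K_of_branch_mem {t : ℝ} (ht : t ∈ Icc S.a S.a2) {k : ℕ}
    (h : S.branch k t ∈ S.f '' S.K) : t ∈ S.K := by
  have htI := S.Icc_a_a2_subset ht
  obtain ⟨s, hs, hst⟩ := h
  have hgs := S.memA.f_inj (S.K_subset hs) ((S.memA.g_maps.iterate k) htI) hst
  exact S.mem_of_iterate_g_mem htI ht.1 (hgs ▸ hs)

def exceptional : Set ℝ := ⋃ k, S.branch k '' (S.K ∩ S.Hg)

lemma countable_exceptional : S.exceptional.Countable :=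
  countable_iUnion fun _ => S.countable_K_inter_Hg.image _

lemma mem_exceptional {y : ℝ} (hR : y ∈ S.Rf) (hy : y ∈ S.f '' S.K) : y ∈ S.exceptional := by
  obtain ⟨k, t, ht, rfl⟩ := S.exists_branch hR.1
  have hΦ : S.Φ (S.branch k t) ∈ S.Hg := hR.2
  rw [S.Φ_branch_apply k ht] at hΦ
  exact mem_iUnion.2 ⟨k, t, ⟨S.mem_K_of_branch_mem (Ioc_subset_Icc_self ht) hy, hΦ⟩, rfl⟩

lemma not_Ioo_subset_Rf_inter_image_f {u v : ℝ} (huv : u < v) (hR : Ioo u v ⊆ S.Rf)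
    (hf : Ioo u v ⊆ S.f '' S.K) : False :=
  not_Ioo_subset_of_countable huv S.countable_exceptional fun _ hy =>
    S.mem_exceptional (hR hy) (hf hy)

lemma Icc_subset_image_g_of_Ioo_subset_Rf {u v : ℝ} (huv : u < v) (hK : Ioo u v ⊆ S.K)
    (hR : Ioo u v ⊆ S.Rf) : Icc u v ⊆ S.g '' S.K := by
  refine Icc_subset_of_Ioo_diff_subset huv S.countable_exceptional S.isClosed_image_g ?_
  rintro y ⟨hy, hyE⟩
  have hyK := hK hy
  rw [← S.image_union] at hyK
  exact hyK.resolve_left fun hf => hyE (S.mem_exceptional (hR hy) hf)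

lemma a_mem_interior_Rf : S.a ∈ interior S.Rf :=
  (S.castration ⟨le_rfl, S.a_lt_b.le⟩).resolve_right fun h =>
    (lt_irrefl _ (interior_subset h : S.a ∈ S.Rg).1.1)

lemma not_Icc_subset_K_of_lt_a {c : ℝ} (hc : c < S.a) : ¬ Icc c S.a ⊆ S.K := by
  intro hK
  obtain ⟨l, r, ⟨hl, hr⟩, hlr⟩ :=
    mem_nhds_iff_exists_Ioo_subset.1 (mem_interior_iff_mem_nhds.1 S.a_mem_interior_Rf)
  refine S.not_Ioo_subset_Rf_inter_image_f (max_lt hc hl)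
    (fun y hy => hlr ⟨(le_max_right _ _).trans_lt hy.1, hy.2.trans hr⟩) fun y hy => ?_
  exact S.mem_image_f_of_lt_a (hK ⟨(le_max_left _ _).trans hy.1.le, hy.2.le⟩) hy.2

lemma not_Icc_subset_K_of_lt_a2 {τ : ℝ} (hτ : τ < S.a2) : ¬ Icc τ S.a2 ⊆ S.K := by
  intro hK
  set p := max τ ((S.b + S.a2) / 2)
  have hbp : S.b < p := lt_max_of_lt_right (by linarith [S.b_lt_a2])
  have hpa2 : p < S.a2 := max_lt hτ (by linarith [S.b_lt_a2])
  obtain ⟨c, hc, hgc⟩ := intermediate_value_Ico S.a_pos.le S.memA.continuous_g.continuousOn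
    (⟨(S.a_lt_b.trans hbp).le, hpa2⟩ : p ∈ Ico S.a S.a2)
  have hcI : c ∈ unitI := ⟨hc.1, hc.2.le.trans S.a_mem.2⟩
  refine S.not_Icc_subset_K_of_lt_a hc.2 fun r hr => ?_
  have hrI : r ∈ unitI := ⟨hc.1.trans hr.1, hr.2.trans S.a_mem.2⟩
  have hpr : p ≤ S.g r := hgc ▸ S.memA.strictMonoOn_g.monotoneOn hcI hrI hr.1
  exact S.mem_of_g_mem hrI (hbp.trans_le hpr)
    (hK ⟨(le_max_left _ _).trans hpr, S.memA.strictMonoOn_g.monotoneOn hrI S.a_mem hr.2⟩)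

lemma branch_a2_not_mem_Ioc {u v : ℝ} (hf : Icc u v ⊆ S.f '' S.K) (k : ℕ) :
    S.branch k S.a2 ∉ Ioc u v := by
  rintro ⟨hu, hv⟩
  obtain ⟨τ, hτ, hτw⟩ := intermediate_value_Ico S.a_lt_a2.le (S.continuous_branch k).continuousOn
    (⟨le_max_right _ _, max_lt hu (S.strictMonoOn_branch k S.a_mem S.a2_mem S.a_lt_a2)⟩ :
      max u (S.branch k S.a) ∈ Ico (S.branch k S.a) (S.branch k S.a2))
  have hτa2 : Icc τ S.a2 ⊆ Icc S.a S.a2 := Icc_subset_Icc_left hτ.1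
  refine S.not_Icc_subset_K_of_lt_a2 hτ.2 fun r hr => S.mem_K_of_branch_mem (k := k) (hτa2 hr)
    (hf ?_)
  have hr' := S.mapsTo_branch hτa2 k hr
  exact ⟨(le_max_left _ _).trans (hτw ▸ hr'.1), hr'.2.trans hv⟩

lemma exists_branch_of_Icc_subset_image_f {u v : ℝ} (huv : u < v) (hf : Icc u v ⊆ S.f '' S.K)
    (hu : S.b2 ≤ u) : ∃ k, ∃ t ∈ Ioc S.a S.a2, S.branch k t = v ∧ S.branch k S.a ≤ u := by
  have hvb : v < S.b := by
    refine (S.le_b_of_mem_image_f (hf (right_mem_Icc.2 huv.le))).lt_of_ne fun hvb => ?_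
    obtain ⟨k, hk⟩ := (S.tendsto_branch_a2.eventually_const_lt (hvb ▸ huv)).exists
    exact S.branch_a2_not_mem_Ioc hf k ⟨hk, hvb ▸ S.branch_le_b k S.a2_mem⟩
  obtain ⟨k, t, ht, rfl⟩ := S.exists_branch ⟨hu.trans huv.le, hvb⟩
  refine ⟨k, t, ht, rfl, ?_⟩
  cases k with
  | zero => exact (S.memA.strictMonoOn_f S.a_mem S.b_mem S.a_lt_b).le.trans hu
  | succ j =>
    rw [S.branch_succ_a]
    by_contra! h
    refine S.branch_a2_not_mem_Ioc hf j ⟨h, ?_⟩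
    rw [← S.branch_succ_a]
    exact (S.strictMonoOn_branch _ S.a_mem (S.Icc_a_a2_subset (Ioc_subset_Icc_self ht)) ht.1).le

/-- `Φ` maps the interval onto an interval of `K ∩ G₁` at least `μ` times longer. -/
lemma hasCoreInterval_mul_of_image_f {u v : ℝ} (huv : u < v) (hf : Icc u v ⊆ S.f '' S.K)
    (hu : S.b2 ≤ u) : S.HasCoreInterval (S.μ * (v - u)) := by
  obtain ⟨k, t, ht, rfl, hku⟩ := S.exists_branch_of_Icc_subset_image_f huv hf hu
  obtain ⟨q, hq, rfl⟩ :=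
    intermediate_value_Ico ht.1.le (S.continuous_branch k).continuousOn ⟨hku, huv⟩
  have hqt : Icc q t ⊆ Icc S.a S.a2 := Icc_subset_Icc hq.1 ht.2
  have hmaps := S.mapsTo_branch hqt k
  refine ⟨q, t, hq.2, ?_, fun r hr => ⟨S.mem_K_of_branch_mem (hqt hr) (hf (hmaps hr)),
    S.b2_lt_a.le.trans (hqt hr).1, (hqt hr).2⟩⟩
  refine mul_sub_le_of_leftInverse_expanding (S.contDiff_branch k)
    (zero_lt_one.trans S.one_lt_μ) hq.2 (S.countable_K_inter_Hf.image S.Φ)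
    (fun x hx => S.Φ_branch_apply k ⟨hq.1.trans_lt hx.1, hx.2.le.trans ht.2⟩)
    (fun x hx => S.deriv_branch_ne_zero k (S.Icc_a_a2_subset (hqt (Ioo_subset_Icc_self hx)))) ?_
  rintro x ⟨hx, hxE⟩ hd
  have hy := hf (hmaps (Ioo_subset_Icc_self hx))
  refine S.expanding_Φ _ ⟨⟨hu.trans (hmaps (Ioo_subset_Icc_self hx)).1,
    S.le_b_of_mem_image_f hy⟩, fun hH => hxE ⟨_, ⟨S.image_f_subset hy, hH⟩, ?_⟩⟩ hd
  exact S.Φ_branch_apply k ⟨hq.1.trans_lt hx.1, hx.2.le.trans ht.2⟩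

lemma HasCoreInterval.mono {ℓ ℓ' : ℝ} (h : S.HasCoreInterval ℓ') (hle : ℓ ≤ ℓ') :
    S.HasCoreInterval ℓ := by
  obtain ⟨u, v, huv, hℓ, hsub⟩ := h
  exact ⟨u, v, huv, hle.trans hℓ, hsub⟩

lemma hasCoreInterval_of_reflect {ℓ : ℝ} (h : S.reflect.HasCoreInterval ℓ) :
    S.HasCoreInterval ℓ := by
  obtain ⟨u, v, huv, hℓ, hsub⟩ := h
  rw [reflect_K_inter_core, Icc_subset_preimage_one_sub] at hsub
  exact ⟨1 - v, 1 - u, by linarith, by linarith, hsub⟩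

lemma Icc_subset_image_f_of_Ioo_subset_Rg {u v : ℝ} (huv : u < v) (hK : Ioo u v ⊆ S.K)
    (hR : Ioo u v ⊆ S.Rg) : Icc u v ⊆ S.f '' S.K := by
  have h := S.reflect.Icc_subset_image_g_of_Ioo_subset_Rf (u := 1 - v) (v := 1 - u) (by linarith)
    (by rwa [reflect_K, Ioo_one_sub_subset_preimage_one_sub])
    (by rwa [reflect_Rf, Ioo_one_sub_subset_preimage_one_sub])
  rwa [reflect_image_g, Icc_one_sub_subset_preimage_one_sub] at h

lemma not_Icc_subset_K_of_b_lt {d : ℝ} (hd : S.b < d) : ¬ Icc S.b d ⊆ S.K := by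
  intro h
  apply S.reflect.not_Icc_subset_K_of_lt_a (c := 1 - d) (by rw [reflect_a]; linarith)
  rwa [reflect_a, reflect_K, Icc_one_sub_subset_preimage_one_sub]

lemma hasCoreInterval_mul_of_image_g {u v : ℝ} (huv : u < v) (hg : Icc u v ⊆ S.g '' S.K)
    (hv : v ≤ S.a2) : S.HasCoreInterval (S.μ * (v - u)) := by
  have h := S.reflect.hasCoreInterval_mul_of_image_f (u := 1 - v) (v := 1 - u) (by linarith)
    (by rwa [reflect_image_f, Icc_one_sub_subset_preimage_one_sub]) (by rw [reflect_b2]; linarith)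
  rw [reflect_μ, show 1 - u - (1 - v) = v - u by ring] at h
  exact S.hasCoreInterval_of_reflect h

/-- Where the interiors of `R_f` and `R_g` meet, `K` would lie in the countable exceptional
set. -/
lemma Icc_subset_image_f_or_g {u v : ℝ} (hau : S.a ≤ u) (huv : u < v) (hvb : v ≤ S.b)
    (hK : Icc u v ⊆ S.K) : Icc u v ⊆ S.f '' S.K ∨ Icc u v ⊆ S.g '' S.K := by
  have hcover : Ioo u v ⊆ interior S.Rf ∪ interior S.Rg := fun y hy =>
    S.castration ⟨hau.trans hy.1.le, hy.2.le.trans hvb⟩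
  have hKo : Ioo u v ⊆ S.K := Ioo_subset_Icc_self.trans hK
  by_cases hG : (Ioo u v ∩ interior S.Rg).Nonempty
  · by_cases hF : (Ioo u v ∩ interior S.Rf).Nonempty
    · obtain ⟨z, hz, hzF, hzG⟩ :=
        isPreconnected_Ioo _ _ isOpen_interior isOpen_interior hcover hF hG
      obtain ⟨l, r, hzlr, hlr⟩ := mem_nhds_iff_exists_Ioo_subset.1
        ((isOpen_Ioo.inter (isOpen_interior.inter isOpen_interior)).mem_nhds ⟨hz, hzF, hzG⟩)
      have hlr' : l < r := hzlr.1.trans hzlr.2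
      have hf := S.Icc_subset_image_f_of_Ioo_subset_Rg hlr' (fun y hy => hKo (hlr hy).1)
        fun y hy => interior_subset (hlr hy).2.2
      exact (S.not_Ioo_subset_Rf_inter_image_f hlr' (fun y hy => interior_subset (hlr hy).2.1)
        (Ioo_subset_Icc_self.trans hf)).elim
    · exact Or.inl (S.Icc_subset_image_f_of_Ioo_subset_Rg huv hKo fun y hy =>
        interior_subset ((hcover hy).resolve_left fun h => hF ⟨y, hy, h⟩))
  · exact Or.inr (S.Icc_subset_image_g_of_Ioo_subset_Rf huv hKo fun y hy =>
      interior_subset ((hcover hy).resolve_right fun h => hG ⟨y, hy, h⟩))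

lemma hasCoreInterval_mul {ℓ : ℝ} (h : S.HasCoreInterval ℓ) : S.HasCoreInterval (S.μ * ℓ) := by
  obtain ⟨u, v, huv, hℓ, hsub⟩ := h
  refine HasCoreInterval.mono S ?_ (mul_le_mul_of_nonneg_left hℓ (zero_le_one.trans S.one_lt_μ.le))
  have hK : Icc u v ⊆ S.K := fun x hx => (hsub hx).1
  have hu : S.b2 ≤ u := (hsub (left_mem_Icc.2 huv.le)).2.1
  have hv : v ≤ S.a2 := (hsub (right_mem_Icc.2 huv.le)).2.2
  rcases lt_or_ge v S.a with hva | hav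
  · exact S.hasCoreInterval_mul_of_image_f huv
      (fun x hx => S.mem_image_f_of_lt_a (hK hx) (hx.2.trans_lt hva)) hu
  rcases lt_or_ge S.b u with hbu | hub
  · exact S.hasCoreInterval_mul_of_image_g huv
      (fun x hx => S.mem_image_g_of_b_lt (hK hx) (hbu.trans_le hx.1)) hv
  rcases lt_or_ge u S.a with hua | hau
  · exact (S.not_Icc_subset_K_of_lt_a hua ((Icc_subset_Icc_right hav).trans hK)).elim
  rcases lt_or_ge S.b v with hbv | hvb
  · exact (S.not_Icc_subset_K_of_b_lt hbv ((Icc_subset_Icc_left hub).trans hK)).elim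
  rcases S.Icc_subset_image_f_or_g hau huv hvb hK with hf | hg
  · exact S.hasCoreInterval_mul_of_image_f huv hf hu
  · exact S.hasCoreInterval_mul_of_image_g huv hg hv

lemma not_Icc_subset_K_inter_core {u v : ℝ} (huv : u < v) : ¬ Icc u v ⊆ S.K ∩ S.core := by
  intro hsub
  have hpow : ∀ n : ℕ, S.HasCoreInterval (S.μ ^ n * (v - u)) := by
    intro n
    induction n with
    | zero => exact ⟨u, v, huv, by simp, hsub⟩
    | succ n ih => rw [pow_succ', mul_assoc]; exact S.hasCoreInterval_mul ih
  obtain ⟨n, hn⟩ := pow_unbounded_of_one_lt (v - u)⁻¹ S.one_lt_μ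
  obtain ⟨u', v', huv', hℓ, hsub'⟩ := hpow n
  have hu' : S.b2 ≤ u' := (hsub' (left_mem_Icc.2 huv'.le)).2.1
  have hv' : v' ≤ S.a2 := (hsub' (right_mem_Icc.2 huv'.le)).2.2
  have hgrow : 1 < S.μ ^ n * (v - u) := by
    simpa [inv_mul_cancel₀ (sub_pos.2 huv).ne'] using mul_lt_mul_of_pos_right hn (sub_pos.2 huv)
  linarith [S.a2_lt_one, S.b2_nonneg]

/-- Every point of `(g 0, 1)` is `g^[k] t` with `t ∈ G₁`, so an interval of `K` around it pulls
back into the core. -/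
lemma not_Icc_subset_K_of_a_lt {u v s : ℝ} (hs : s ∈ Ioo u v) (has : S.a < s) (hs1 : s < 1) :
    ¬ Icc u v ⊆ S.K := by
  intro hK
  obtain ⟨n, hn⟩ := ((S.memA.tendsto_iterate_g S.a2_mem
    (S.a_pos.trans S.a_lt_a2)).eventually_const_lt hs1).exists
  obtain ⟨k, t, ht, rfl⟩ :=
    exists_iterate_eq_of_le_iterate S.memA.continuous_g (S.memA.le_g S.a_mem) has hn.le
  obtain ⟨l, hlt, hl⟩ := mem_nhdsLE_iff_exists_Icc_subset.1 (nhdsWithin_le_nhds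
    ((S.memA.continuous_g.iterate k).continuousAt.preimage_mem_nhds (isOpen_Ioo.mem_nhds hs)))
  refine S.not_Icc_subset_K_inter_core (max_lt hlt ht.1) fun r hr => ?_
  have hrI : r ∈ Icc S.a S.a2 := ⟨(le_max_right _ _).trans hr.1, hr.2.trans ht.2⟩
  exact ⟨S.mem_of_iterate_g_mem (S.Icc_a_a2_subset hrI) hrI.1
    (hK (Ioo_subset_Icc_self (hl ⟨(le_max_left _ _).trans hr.1, hr.2⟩))),
    S.b2_lt_a.le.trans hrI.1, hrI.2⟩

lemma not_Icc_subset_K {u v : ℝ} (huv : u < v) : ¬ Icc u v ⊆ S.K := by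
  intro hK
  have hu0 : 0 ≤ u := (S.K_subset (hK (left_mem_Icc.2 huv.le))).1
  have hv1 : v ≤ 1 := (S.K_subset (hK (right_mem_Icc.2 huv.le))).2
  rcases lt_or_ge S.a ((u + v) / 2) with ha | ha
  · exact S.not_Icc_subset_K_of_a_lt ⟨by linarith, by linarith⟩ ha (by linarith) hK
  · refine S.reflect.not_Icc_subset_K_of_a_lt (u := 1 - v) (v := 1 - u) (s := 1 - (u + v) / 2)
      ⟨by linarith, by linarith⟩ (by rw [reflect_a]; linarith [S.a_lt_b]) (by linarith) ?_
    rwa [reflect_K, Icc_one_sub_subset_preimage_one_sub]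

lemma isTotallyDisconnected_K : IsTotallyDisconnected S.K := by
  intro t hts ht x hx y hy
  by_contra hxy
  rcases lt_or_gt_of_ne hxy with h | h
  · exact S.not_Icc_subset_K h ((ht.Icc_subset hx hy).trans hts)
  · exact S.not_Icc_subset_K h ((ht.Icc_subset hy hx).trans hts)

end Setting

lemma exists_setting {f g : ℝ → ℝ} {Hf Hg K : Set ℝ} (hC : MemC f g Hf Hg)
    (hK : IsMinimalSet f g K) : ∃ S : Setting, S.K = K := by
  obtain ⟨hA, hSo, hH, ⟨μ, hμ, hEeF, hEeG⟩, hCa⟩ := hC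
  obtain ⟨hHf, hHg⟩ := hK.countable_inter_holes hA hH
  have hRf : Rf f g Hg = ruinationF f (calF f g) Hg := by
    change {x | x ∈ Icc (f (f 1)) (f 1) \ {f 1} ∧ _} = _
    rw [Icc_sdiff_right]
    rfl
  have hRg : Rg f g Hf = ruinationG g (calG f g) Hf := by
    change {x | x ∈ Icc (g 0) (g (g 0)) \ {g 0} ∧ _} = _
    rw [Icc_sdiff_left]
    rfl
  refine ⟨{
    f := f
    g := g
    memA := hA
    so := hSo
    K := K
    isClosed_K := hK.isClosed
    K_subset := hK.2.1
    image_union := hK.image_union hA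
    Hf := Hf
    Hg := Hg
    countable_K_inter_Hf := hHf
    countable_K_inter_Hg := hHg
    Φ := calF f g
    Ψ := calG f g
    Φ_branch := fun k _ ht => hA.calF_branch k ht
    Ψ_branch := fun k _ ht => hA.calG_branch k ht
    μ := μ
    one_lt_μ := hμ
    expanding_Φ := hEeF
    expanding_Ψ := hEeG
    castration := hRf ▸ hRg ▸ hCa }, rfl⟩

/-- if `(f,g) ∈ 𝒞`, then the unique minimal set `K` is homeomorphic to the
Cantor set, i.e. `K` is nonempty, compact, perfect and totally disconnected. -/
theorem minimal_set_is_cantor (f g : ℝ → ℝ) (Hf Hg K : Set ℝ)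
    (hC : MemC f g Hf Hg) (hK : IsMinimalSet f g K) :
    K.Nonempty ∧ IsCompact K ∧ Perfect K ∧ IsTotallyDisconnected K := by
  obtain ⟨S, rfl⟩ := exists_setting hC hK
  exact ⟨hK.1, hK.isCompact, hK.perfect hC.1, S.isTotallyDisconnected_K⟩

end IFSPaper
end
end
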